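/- Let O, D be independent absolutely continuous random times with hazard rates h_O, h_D, and let τ > 0. The random time T = min(O,D)·1{D ≤ τ} + O·1{D > τ} has survival function exp(−∫_0^t (h_O(u) + h_D(u)·1{u ≤ τ}) du) for t ≥ 0, i.e., its hazard is h_T(t) = h_O(t) + h_D(t)·1{t ≤ τ}. -/

import Mathlib

open MeasureTheory ProbabilityTheory Set

/-! The event `{t < T}` is exactly `{t < O} ∩ {min(t, τ) < D}`: on `{D ≤ τ}` the condition
`min(t, τ) < D` is just `t < D`, and on `{τ < D}` it always holds. By independence its probability
is `exp(−∫_0^t h_O) · exp(−∫_0^{min(t, τ)} h_D)`, and `∫_0^{min(t, τ)} h_D = ∫_0^t h_D · 1{· ≤ τ}`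
because `τ ≥ 0`. -/

theorem lt_ite_le_min_iff {t τ o d : ℝ} :
    t < (if d ≤ τ then min o d else o) ↔ t < o ∧ min t τ < d := by
  split_ifs with hd
  · rw [lt_min_iff, min_lt_iff]
    constructor
    · rintro ⟨hto, htd⟩
      exact ⟨hto, Or.inl htd⟩
    · rintro ⟨hto, htd | hτd⟩
      · exact ⟨hto, htd⟩
      · exact absurd hd (not_le.mpr hτd)
  · exact ⟨fun hto => ⟨hto, (min_le_right t τ).trans_lt (not_le.mp hd)⟩, And.left⟩

theorem intervalIntegral_indicator_Iic {f : ℝ → ℝ} {a t τ : ℝ} (hat : a ≤ t) (haτ : a ≤ τ) :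
    ∫ u in a..t, (Iic τ).indicator f u = ∫ u in a..min t τ, f u := by
  rw [intervalIntegral.integral_of_le hat, intervalIntegral.integral_of_le (le_min hat haτ),
    setIntegral_indicator measurableSet_Iic, Ioc_inter_Iic]

theorem IntervalIntegrable.indicator_Iic {f : ℝ → ℝ} {a b τ : ℝ}
    (hf : IntervalIntegrable f volume a b) :
    IntervalIntegrable ((Iic τ).indicator f) volume a b :=
  ⟨hf.1.indicator measurableSet_Iic, hf.2.indicator measurableSet_Iic⟩

theorem stmt7_general {Ω : Type*} [MeasurableSpace Ω] (μ : Measure Ω) [IsProbabilityMeasure μ]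
    (O D : Ω → ℝ)
    (hindep : IndepFun O D μ)
    (hO hD : ℝ → ℝ)
    (hOint : ∀ t : ℝ, IntervalIntegrable hO volume 0 t)
    (hDint : ∀ t : ℝ, IntervalIntegrable hD volume 0 t)
    (hSO : ∀ t : ℝ, 0 ≤ t →
      μ {ω | t < O ω} = ENNReal.ofReal (Real.exp (-∫ u in (0:ℝ)..t, hO u)))
    (hSD : ∀ t : ℝ, 0 ≤ t →
      μ {ω | t < D ω} = ENNReal.ofReal (Real.exp (-∫ u in (0:ℝ)..t, hD u)))
    (τ : ℝ) (hτ : 0 < τ) :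
    ∀ t : ℝ, 0 ≤ t →
      μ {ω | t < (if D ω ≤ τ then min (O ω) (D ω) else O ω)} =
        ENNReal.ofReal
          (Real.exp (-∫ u in (0:ℝ)..t, (hO u + hD u * (if u ≤ τ then 1 else 0)))) := by
  intro t ht
  have hevent : {ω | t < (if D ω ≤ τ then min (O ω) (D ω) else O ω)} =
      O ⁻¹' Ioi t ∩ D ⁻¹' Ioi (min t τ) := by
    ext ω
    exact lt_ite_le_min_iff
  have hcutoff : (fun u => hD u * (if u ≤ τ then 1 else 0)) = (Iic τ).indicator hD := by
    ext u
    by_cases hu : u ≤ τ <;> simp [hu]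
  rw [hevent, hindep.measure_inter_preimage_eq_mul _ _ measurableSet_Ioi measurableSet_Ioi,
    intervalIntegral.integral_add (hOint t) (hcutoff ▸ (hDint t).indicator_Iic), hcutoff,
    intervalIntegral_indicator_Iic ht hτ.le, neg_add, Real.exp_add,
    ENNReal.ofReal_mul (Real.exp_pos _).le]
  exact congr_arg₂ _ (hSO t ht) (hSD _ (le_min ht hτ.le))

/-- Hazard representation of the cure-time model: if independent `O, D` have hazard rates
`hO, hD` (so `P(X > t) = exp(−∫_0^t h_X)` for `t ≥ 0`), then
`T = min(O,D)·1{D ≤ τ} + O·1{D > τ}` has survival function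
`exp(−∫_0^t (hO(u) + hD(u)·1{u ≤ τ}) du)` for `t ≥ 0`, i.e. hazard
`h_T(t) = hO(t) + hD(t)·1{t ≤ τ}`. -/
theorem stmt7 {Ω : Type*} [MeasurableSpace Ω] (μ : Measure Ω) [IsProbabilityMeasure μ]
    (O D : Ω → ℝ) (hOm : Measurable O) (hDm : Measurable D)
    (hindep : IndepFun O D μ)
    (hO hD : ℝ → ℝ) (hOnn : ∀ u, 0 ≤ hO u) (hDnn : ∀ u, 0 ≤ hD u)
    (hOint : ∀ t : ℝ, IntervalIntegrable hO volume 0 t)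
    (hDint : ∀ t : ℝ, IntervalIntegrable hD volume 0 t)
    (hSO : ∀ t : ℝ, 0 ≤ t →
      μ {ω | t < O ω} = ENNReal.ofReal (Real.exp (-∫ u in (0:ℝ)..t, hO u)))
    (hSD : ∀ t : ℝ, 0 ≤ t →
      μ {ω | t < D ω} = ENNReal.ofReal (Real.exp (-∫ u in (0:ℝ)..t, hD u)))
    (τ : ℝ) (hτ : 0 < τ) :
    ∀ t : ℝ, 0 ≤ t →
      μ {ω | t < (if D ω ≤ τ then min (O ω) (D ω) else O ω)} =
        ENNReal.ofReal
          (Real.exp (-∫ u in (0:ℝ)..t, (hO u + hD u * (if u ≤ τ then 1 else 0)))) :=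
  stmt7_general μ O D hindep hO hD hOint hDint hSO hSD τ hτ
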